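/- For every quaternionic unitary matrix 𝓜 ∈ U_ℍ(n), the induced action of τ(𝓜) on the exterior algebra of ℂ^{2n} fixes both β_n and Ω_{2n}: τ(𝓜).β_n = β_n and τ(𝓜).Ω_{2n} = Ω_{2n}. -/

import Mathlib

open scoped Quaternion
open Matrix Sum

noncomputable section

/-- The complex part `a` in the decomposition `q = a + b·j` of a quaternion. -/
def qa (q : ℍ[ℝ]) : ℂ := ⟨q.re, q.imI⟩

/-- The complex part `b` in the decomposition `q = a + b·j` of a quaternion. -/
def qb (q : ℍ[ℝ]) : ℂ := ⟨q.imJ, q.imK⟩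

/-- Entrywise complex conjugation of a complex matrix. -/
def conjM {m k : Type*} (M : Matrix m k ℂ) : Matrix m k ℂ := M.map (starRingEnd ℂ)

/-- The embedding τ : M_ℍ(p,m) → M_ℂ(2p,2m), τ(a + b·j) = [[a, −b],[conj b, conj a]]. -/
def tau {p m : ℕ} (M : Matrix (Fin p) (Fin m) ℍ[ℝ]) :
    Matrix (Fin p ⊕ Fin p) (Fin m ⊕ Fin m) ℂ :=
  Matrix.fromBlocks (M.map qa) (-(M.map qb)) (conjM (M.map qb)) (conjM (M.map qa))

/-- The standard symplectic matrix J = [[0, Iₙ],[−Iₙ, 0]]. -/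
def Jmat (n : ℕ) : Matrix (Fin n ⊕ Fin n) (Fin n ⊕ Fin n) ℂ :=
  Matrix.fromBlocks 0 1 (-1) 0

/-- index set {0,…,2n−1}, as two blocks. -/
abbrev Idx (n : ℕ) := Fin n ⊕ Fin n

/-- ℂ^{2n}. -/
abbrev Vc (n : ℕ) := Idx n → ℂ

/-- The exterior algebra of ℂ^{2n}. -/
abbrev EA (n : ℕ) := ExteriorAlgebra ℂ (Vc n)

/-- Basis 1-vectors ω^A of the exterior algebra. -/
def ω {n : ℕ} (A : Idx n) : EA n := ExteriorAlgebra.ι ℂ (Pi.single A 1)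

/-- Ω_{2n} = ω⁰∧ω^n∧ω¹∧ω^{n+1}∧…∧ω^{n−1}∧ω^{2n−1}. -/
def Ωn (n : ℕ) : EA n := (List.ofFn fun l : Fin n => ω (inl l) * ω (inr l)).prod

/-- β_n = Σ_l ω^l∧ω^{n+l}. -/
def βn (n : ℕ) : EA n := ∑ l : Fin n, ω (inl l) * ω (inr l)

/-- Induced action of a 2n×2n complex matrix on the exterior algebra,
determined by N.ω^A = Σ_B N_{AB} ω^B. -/
def actE {n : ℕ} (N : Matrix (Idx n) (Idx n) ℂ) : EA n →ₐ[ℂ] EA n :=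
  ExteriorAlgebra.map (Matrix.mulVecLin Nᵀ)

/-- ℝ^{4n}. -/
abbrev V4 (n : ℕ) := Fin (4 * n) → ℝ

/-- The coordinate index 4l+β. -/
def X {n : ℕ} (l : Fin n) (β : Fin 4) : Fin (4 * n) :=
  ⟨4 * l.val + β.val, by have h1 := l.isLt; have h2 := β.isLt; omega⟩

/-- Partial derivative of a complex-valued function on ℝ^{4n}. -/
def pd {n : ℕ} (a : Fin (4 * n)) (f : V4 n → ℂ) : V4 n → ℂ :=
  fun q => fderiv ℝ f q (Pi.single a 1)

/-- The operators ∇_{Aα}, α = 0' (α=0) or 1' (α=1). -/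
def nabla {n : ℕ} (A : Idx n) (α : Fin 2) (f : V4 n → ℂ) : V4 n → ℂ :=
  fun q =>
    match A with
    | Sum.inl l =>
        if α = 0 then pd (X l 0) f q + Complex.I * pd (X l 1) f q
        else -pd (X l 2) f q - Complex.I * pd (X l 3) f q
    | Sum.inr l =>
        if α = 0 then pd (X l 2) f q - Complex.I * pd (X l 3) f q
        else pd (X l 0) f q - Complex.I * pd (X l 1) f q

/-- ∇_{Aα} applied to a real-valued function. -/
def nablaR {n : ℕ} (A : Idx n) (α : Fin 2) (u : V4 n → ℝ) : V4 n → ℂ :=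
  nabla A α (fun x => ((u x : ℝ) : ℂ))

/-- Δ_{AB}u = ½(∇_{A0'}∇_{B1'}u − ∇_{B0'}∇_{A1'}u). -/
def Delta {n : ℕ} (A B : Idx n) (u : V4 n → ℝ) : V4 n → ℂ :=
  fun q => (1 / 2 : ℂ) *
    (nabla A 0 (nabla B 1 (fun x => ((u x : ℝ) : ℂ))) q
      - nabla B 0 (nabla A 1 (fun x => ((u x : ℝ) : ℂ))) q)

/-- The Baston operator Δu = Σ_{A,B} Δ_{AB}u · ω^A∧ω^B. -/
def Baston {n : ℕ} (u : V4 n → ℝ) (q : V4 n) : EA n :=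
  ∑ A : Idx n, ∑ B : Idx n, Delta A B u q • (ω A * ω B)

/-- The quaternion units. -/
def iH : ℍ[ℝ] := ⟨0, 1, 0, 0⟩
def jH : ℍ[ℝ] := ⟨0, 0, 1, 0⟩
def kH : ℍ[ℝ] := ⟨0, 0, 0, 1⟩

/-- Partial derivative of a quaternion-valued function on ℝ^{4n}. -/
def pdH {n : ℕ} (a : Fin (4 * n)) (f : V4 n → ℍ[ℝ]) : V4 n → ℍ[ℝ] :=
  fun q => fderiv ℝ f q (Pi.single a 1)

/-- Partial derivative of a real-valued function on ℝ^{4n}. -/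
def pdR {n : ℕ} (a : Fin (4 * n)) (f : V4 n → ℝ) : V4 n → ℝ :=
  fun q => fderiv ℝ f q (Pi.single a 1)

/-- ∂u/∂q_k = (∂_{x_{4k}} − i∂_{x_{4k+1}} − j∂_{x_{4k+2}} − k∂_{x_{4k+3}})u for real u. -/
def dq {n : ℕ} (k : Fin n) (u : V4 n → ℝ) : V4 n → ℍ[ℝ] :=
  fun q => ⟨pdR (X k 0) u q, -pdR (X k 1) u q, -pdR (X k 2) u q, -pdR (X k 3) u q⟩

/-- ∂/∂q̄_l = ∂_{x_{4l}} + i∂_{x_{4l+1}} + j∂_{x_{4l+2}} + k∂_{x_{4l+3}} on ℍ-valued functions. -/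
def dqbar {n : ℕ} (l : Fin n) (f : V4 n → ℍ[ℝ]) : V4 n → ℍ[ℝ] :=
  fun q => pdH (X l 0) f q + iH * pdH (X l 1) f q + jH * pdH (X l 2) f q + kH * pdH (X l 3) f q

/-- The quaternionic Hessian of a real function u. -/
def Hess {n : ℕ} (u : V4 n → ℝ) (q : V4 n) : Matrix (Fin n) (Fin n) ℍ[ℝ] :=
  Matrix.of fun l k => dqbar l (dq k u) q

/-- ω^I = ω^{i₁}∧…∧ω^{i_p} for a multi-index I. -/
def ωProd {n p : ℕ} (I : Fin p → Idx n) : EA n :=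
  (List.ofFn fun j => ω (I j)).prod

/-- The Λ^pℂ^{2n}-valued function with coefficient functions f: F = Σ_I f_I ω^I. -/
def formVal {n p : ℕ} (f : (Fin p → Idx n) → V4 n → ℂ) (q : V4 n) : EA n :=
  ∑ I : Fin p → Idx n, f I q • ωProd I

/-- Coefficients of d_α F for F with coefficients f:
d_αF = Σ_{A,I} ∇_{Aα}f_I · ω^A∧ω^I. -/
def dcoef {n p : ℕ} (α : Fin 2) (f : (Fin p → Idx n) → V4 n → ℂ) :
    (Fin (p + 1) → Idx n) → V4 n → ℂ :=
  fun J => nabla (J 0) α (f (Fin.tail J))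

/-- Coefficients of the wedge product F∧G. -/
def wedgeCoef {n p q : ℕ} (f : (Fin p → Idx n) → V4 n → ℂ)
    (g : (Fin q → Idx n) → V4 n → ℂ) : (Fin (p + q) → Idx n) → V4 n → ℂ :=
  fun J x => f (fun i => J (Fin.castAdd q i)) x * g (fun i => J (Fin.natAdd p i)) x

/-- The complex coordinate functions z^{Aα}. -/
def zc {n : ℕ} (A : Idx n) (α : Fin 2) : V4 n → ℂ :=
  fun x =>
    match A with
    | Sum.inl l => if α = 0 then ⟨x (X l 0), -x (X l 1)⟩ else ⟨-x (X l 2), x (X l 3)⟩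
    | Sum.inr l => if α = 0 then ⟨x (X l 2), x (X l 3)⟩ else ⟨x (X l 0), x (X l 1)⟩

/-- The quaternionic vector associated to a point of ℝ^{4n}. -/
def quatv {n : ℕ} (v : V4 n) : Fin n → ℍ[ℝ] :=
  fun l => ⟨v (X l 0), v (X l 1), v (X l 2), v (X l 3)⟩

/-- The four real components of a quaternion. -/
def comp4 (q : ℍ[ℝ]) : Fin 4 → ℝ := ![q.re, q.imI, q.imJ, q.imK]

/-- The real-linear action of a quaternionic matrix 𝓤 on ℝ^{4n} ≅ ℍⁿ, q ↦ 𝓤q. -/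
def act {n : ℕ} (U : Matrix (Fin n) (Fin n) ℍ[ℝ]) (v : V4 n) : V4 n :=
  fun a => comp4 ((U *ᵥ quatv v) ⟨a.val / 4, by have := a.isLt; omega⟩)
    ⟨a.val % 4, by omega⟩

/-!
The group `τ(U_ℍ(n))` is symplectic: `τ` is multiplicative and commutes with conjugate
transposition, and `τ(𝓜)ᵀ J = J τ(𝓜)ᴴ`, so `𝓜ᴴ𝓜 = 1` gives `τ(𝓜)ᵀ J τ(𝓜) = J`.
A 2-form `Σ a_{CD} ω^C∧ω^D` depends only on `a − aᵀ`, and `N` acts on it by `a ↦ Nᵀ a N`;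
`β_n` has a coefficient matrix with `a − aᵀ = J`, so symplectic matrices fix `β_n`.
Finally `β_n` is a sum of `n` commuting square-zero terms, hence `β_nⁿ = n! Ω_{2n}`, and any
algebra endomorphism fixing `β_n` fixes `Ω_{2n}`.
-/

section TwoForms

variable {R M ι : Type*} [CommRing R] [AddCommGroup M] [Module R M] [Fintype ι]

def twoForm (v : ι → M) (a : Matrix ι ι R) : ExteriorAlgebra R M :=
  ∑ i, ∑ j, a i j • (ExteriorAlgebra.ι R (v i) * ExteriorAlgebra.ι R (v j))

lemma twoForm_add (v : ι → M) (a b : Matrix ι ι R) :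
    twoForm v (a + b) = twoForm v a + twoForm v b := by
  simp only [twoForm, Matrix.add_apply, add_smul, Finset.sum_add_distrib]

lemma twoForm_neg_transpose (v : ι → M) (a : Matrix ι ι R) :
    twoForm v (-aᵀ) = twoForm v a := by
  rw [twoForm, twoForm, Finset.sum_comm]
  refine Finset.sum_congr rfl fun j _ => Finset.sum_congr rfl fun i _ => ?_
  rw [neg_apply, transpose_apply, neg_smul, ← smul_neg,
    neg_eq_of_add_eq_zero_left (ExteriorAlgebra.ι_add_mul_swap _ _)]

lemma two_smul_twoForm (v : ι → M) (a : Matrix ι ι R) :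
    (2 : R) • twoForm v a = twoForm v (a - aᵀ) := by
  rw [two_smul, sub_eq_add_neg, twoForm_add, twoForm_neg_transpose]

lemma twoForm_eq_of_sub_transpose_eq [Invertible (2 : R)] (v : ι → M) {a b : Matrix ι ι R}
    (h : a - aᵀ = b - bᵀ) : twoForm v a = twoForm v b := by
  rw [← invOf_smul_smul (2 : R) (twoForm v a), two_smul_twoForm, h, ← two_smul_twoForm,
    invOf_smul_smul]

lemma map_twoForm {N : Type*} [AddCommGroup N] [Module R N] (f : M →ₗ[R] N) (v : ι → M)
    (a : Matrix ι ι R) : ExteriorAlgebra.map f (twoForm v a) = twoForm (f ∘ v) a := by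
  simp [twoForm, ExteriorAlgebra.map_apply_ι]

lemma twoForm_sum_smul (N : Matrix ι ι R) (v : ι → M) (a : Matrix ι ι R) :
    twoForm (fun i => ∑ k, N i k • v k) a = twoForm v (Nᵀ * a * N) := by
  have hcoeff : ∀ k l, (Nᵀ * a * N) k l = ∑ i, ∑ j, a i j * (N i k * N j l) := by
    intro k l
    simp only [mul_apply, transpose_apply, Finset.sum_mul]
    rw [Finset.sum_comm]
    exact Finset.sum_congr rfl fun i _ => Finset.sum_congr rfl fun j _ => by ring
  simp only [twoForm, hcoeff, map_sum, map_smul, Finset.sum_mul_sum, smul_mul_smul_comm,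
    Finset.smul_sum, Finset.sum_smul, smul_smul]
  exact (Finset.sum_congr rfl fun _ _ => Finset.sum_comm).trans <| Finset.sum_comm.trans <|
    Finset.sum_congr rfl fun _ _ => (Finset.sum_congr rfl fun _ _ => Finset.sum_comm).trans
      Finset.sum_comm

end TwoForms

section EvenProducts

variable {R M : Type*} [CommRing R] [AddCommGroup M] [Module R M]

lemma ExteriorAlgebra.commute_ι_mul_ι_ι (x y z : M) :
    Commute (ι R x * ι R y) (ι R z) := by
  have swap : ∀ a b : M, ι R a * ι R b = -(ι R b * ι R a) :=
    fun a b => eq_neg_of_add_eq_zero_left (ι_add_mul_swap a b)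
  calc ι R x * ι R y * ι R z = ι R x * (ι R y * ι R z) := mul_assoc _ _ _
    _ = ι R z * (ι R x * ι R y) := by
      rw [swap y, mul_neg, ← mul_assoc, swap x, neg_mul, neg_neg, mul_assoc]

lemma ExteriorAlgebra.commute_ι_mul_ι (x y z w : M) :
    Commute (ι R x * ι R y) (ι R z * ι R w) :=
  (commute_ι_mul_ι_ι x y z).mul_right (commute_ι_mul_ι_ι x y w)

lemma ExteriorAlgebra.ι_mul_ι_mul_self (x y : M) :
    (ι R x * ι R y) * (ι R x * ι R y) = 0 := by
  rw [← mul_assoc, (commute_ι_mul_ι_ι x y x).eq, ← mul_assoc, ι_sq_zero, zero_mul, zero_mul]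

end EvenProducts

section SquareZero

variable {R : Type*} [Semiring R]

lemma Commute.add_pow_succ_of_mul_self_eq_zero {x y : R} (h : Commute x y) (hx : x * x = 0)
    (m : ℕ) : (x + y) ^ (m + 1) = y ^ (m + 1) + (m + 1) • (x * y ^ m) := by
  rw [h.add_pow, Finset.sum_range_succ', Finset.sum_range_succ', Finset.sum_eq_zero]
  · rw [nsmul_eq_mul']
    simp [add_comm]
  · intro i _
    rw [pow_succ, pow_succ, mul_assoc (x ^ i), hx, mul_zero, zero_mul, zero_mul]

lemma List.sum_pow_eq_zero_of_length_lt {L : List R} (hsq : ∀ x ∈ L, x * x = 0)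
    (hc : L.Pairwise Commute) {k : ℕ} (hk : L.length < k) : L.sum ^ k = 0 := by
  induction L generalizing k with
  | nil => exact zero_pow (by simp_all; omega)
  | cons x L ih =>
    obtain ⟨m, rfl⟩ : ∃ m, k = m + 1 := ⟨k - 1, by simp at hk; omega⟩
    have ih' := @ih (fun y hy => hsq y (List.mem_cons_of_mem _ hy)) hc.of_cons
    simp only [List.length_cons] at hk
    rw [List.sum_cons, Commute.add_pow_succ_of_mul_self_eq_zero
      (Commute.list_sum_right _ _ (List.pairwise_cons.mp hc).1) (hsq x List.mem_cons_self),
      ih' (by omega), ih' (by omega), mul_zero, smul_zero, add_zero]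

lemma List.sum_pow_length {L : List R} (hsq : ∀ x ∈ L, x * x = 0) (hc : L.Pairwise Commute) :
    L.sum ^ L.length = L.length.factorial • L.prod := by
  induction L with
  | nil => simp
  | cons x L ih =>
    have hsq' : ∀ y ∈ L, y * y = 0 := fun y hy => hsq y (List.mem_cons_of_mem _ hy)
    rw [List.sum_cons, List.length_cons, Commute.add_pow_succ_of_mul_self_eq_zero
      (Commute.list_sum_right _ _ (List.pairwise_cons.mp hc).1) (hsq x List.mem_cons_self),
      List.sum_pow_eq_zero_of_length_lt hsq' hc.of_cons (by omega), ih hsq' hc.of_cons, zero_add,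
      mul_smul_comm, smul_smul, Nat.factorial_succ, List.prod_cons]

end SquareZero

lemma mulVecLin_transpose_single_one {R ι : Type*} [CommSemiring R] [Fintype ι]
    [DecidableEq ι] (N : Matrix ι ι R) (i : ι) :
    mulVecLin Nᵀ (Pi.single i 1) = ∑ j, N i j • Pi.single j 1 := by
  rw [mulVecLin_apply, mulVec_single_one, col_transpose]
  exact pi_eq_sum_univ' _

section QuaternionComponents

lemma qa_add (p q : ℍ[ℝ]) : qa (p + q) = qa p + qa q := by
  apply Complex.ext <;> simp [qa]

lemma qb_add (p q : ℍ[ℝ]) : qb (p + q) = qb p + qb q := by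
  apply Complex.ext <;> simp [qb]

lemma qa_sum {ι : Type*} (s : Finset ι) (f : ι → ℍ[ℝ]) :
    qa (∑ i ∈ s, f i) = ∑ i ∈ s, qa (f i) :=
  map_sum (AddMonoidHom.mk' qa qa_add) f s

lemma qb_sum {ι : Type*} (s : Finset ι) (f : ι → ℍ[ℝ]) :
    qb (∑ i ∈ s, f i) = ∑ i ∈ s, qb (f i) :=
  map_sum (AddMonoidHom.mk' qb qb_add) f s

lemma qa_mul (p q : ℍ[ℝ]) : qa (p * q) = qa p * qa q - qb p * star (qb q) := by
  apply Complex.ext <;> simp [qa, qb] <;> ring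

lemma qb_mul (p q : ℍ[ℝ]) : qb (p * q) = qa p * qb q + qb p * star (qa q) := by
  apply Complex.ext <;> simp [qa, qb] <;> ring

lemma qa_star (q : ℍ[ℝ]) : qa (star q) = star (qa q) := by
  apply Complex.ext <;> simp [qa]

lemma qb_star (q : ℍ[ℝ]) : qb (star q) = -qb q := by
  apply Complex.ext <;> simp [qb]

end QuaternionComponents

section Tau

variable {p m k : ℕ}

lemma tau_mul (P : Matrix (Fin p) (Fin m) ℍ[ℝ]) (Q : Matrix (Fin m) (Fin k) ℍ[ℝ]) :
    tau (P * Q) = tau P * tau Q := by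
  simp only [tau, fromBlocks_multiply, fromBlocks_inj]
  refine ⟨?_, ?_, ?_, ?_⟩ <;> ext i j <;>
    simp [mul_apply, conjM, qa_sum, qb_sum, qa_mul, qb_mul, Finset.sum_add_distrib,
      sub_eq_add_neg] <;> ring

lemma tau_one : tau (1 : Matrix (Fin p) (Fin p) ℍ[ℝ]) = 1 := by
  rw [tau, ← fromBlocks_one]
  congr 1 <;> ext i j <;> by_cases h : i = j <;> simp [one_apply, h, conjM, qa, qb, Complex.ext_iff]

lemma tau_conjTranspose (M : Matrix (Fin p) (Fin m) ℍ[ℝ]) : tau Mᴴ = (tau M)ᴴ := by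
  simp only [tau, fromBlocks_conjTranspose]
  congr 1 <;> ext i j <;> simp [conjM, qa_star, qb_star]

lemma transpose_tau_mul_Jmat (M : Matrix (Fin p) (Fin m) ℍ[ℝ]) :
    (tau M)ᵀ * Jmat p = Jmat m * (tau M)ᴴ := by
  simp only [tau, Jmat, fromBlocks_transpose, fromBlocks_conjTranspose, fromBlocks_multiply]
  congr 1 <;> ext i j <;> simp [conjM]

lemma transpose_tau_mul_Jmat_mul_tau {M : Matrix (Fin p) (Fin p) ℍ[ℝ]} (hM : Mᴴ * M = 1) :
    (tau M)ᵀ * Jmat p * tau M = Jmat p := by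
  rw [transpose_tau_mul_Jmat, Matrix.mul_assoc, ← tau_conjTranspose, ← tau_mul, hM, tau_one,
    Matrix.mul_one]

end Tau

section SymplecticAction

variable {n : ℕ}

lemma actE_twoForm (N a : Matrix (Idx n) (Idx n) ℂ) :
    actE N (twoForm (fun A => Pi.single A 1) a)
      = twoForm (fun A => Pi.single A 1) (Nᵀ * a * N) := by
  rw [actE, map_twoForm, ← twoForm_sum_smul]
  exact congrArg₂ twoForm (funext (mulVecLin_transpose_single_one N)) rfl

lemma βn_eq_twoForm :
    βn n = twoForm (fun A => Pi.single A 1) (fromBlocks 0 1 0 0 : Matrix (Idx n) (Idx n) ℂ) := by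
  simp [βn, twoForm, ω, Fintype.sum_sum_type, one_apply]

lemma actE_βn_of_symplectic {N : Matrix (Idx n) (Idx n) ℂ} (hN : Nᵀ * Jmat n * N = Jmat n) :
    actE N (βn n) = βn n := by
  set S : Matrix (Idx n) (Idx n) ℂ := fromBlocks 0 1 0 0
  have hS : S - Sᵀ = Jmat n := by
    rw [sub_eq_add_neg]
    simp [S, Jmat, fromBlocks_transpose, fromBlocks_neg, fromBlocks_add]
  rw [βn_eq_twoForm, actE_twoForm]
  refine twoForm_eq_of_sub_transpose_eq _ ?_
  calc Nᵀ * S * N - (Nᵀ * S * N)ᵀ = Nᵀ * (S - Sᵀ) * N := by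
        simp only [transpose_mul, transpose_transpose, Matrix.mul_sub, Matrix.sub_mul,
          Matrix.mul_assoc]
    _ = S - Sᵀ := by rw [hS, hN]

end SymplecticAction

lemma βn_pow (n : ℕ) : βn n ^ n = n.factorial • Ωn n := by
  have h := List.sum_pow_length (L := List.ofFn fun l : Fin n => ω (inl l) * ω (inr l))
    (by simpa [List.mem_ofFn, ω] using fun l => ExteriorAlgebra.ι_mul_ι_mul_self _ _)
    (List.pairwise_ofFn.mpr fun _ _ _ => ExteriorAlgebra.commute_ι_mul_ι _ _ _ _)
  rwa [List.sum_ofFn, List.length_ofFn] at h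

lemma AlgHom.apply_Ωn_of_apply_βn {n : ℕ} (f : EA n →ₐ[ℂ] EA n) (h : f (βn n) = βn n) :
    f (Ωn n) = Ωn n := by
  have h_smul : (n.factorial : ℂ) • f (Ωn n) = (n.factorial : ℂ) • Ωn n := by
    rw [Nat.cast_smul_eq_nsmul, Nat.cast_smul_eq_nsmul, ← map_nsmul, ← βn_pow, map_pow, h]
  exact smul_right_injective (EA n) (Nat.cast_ne_zero.mpr n.factorial_ne_zero) h_smul

/-- for quaternionic unitary 𝓜, the induced action of τ(𝓜) on the
exterior algebra fixes β_n and Ω_{2n}. -/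
theorem stmt_8 {n : ℕ} (M : Matrix (Fin n) (Fin n) ℍ[ℝ])
    (hM : Mᴴ * M = 1 ∧ M * Mᴴ = 1) :
    actE (tau M) (βn n) = βn n ∧ actE (tau M) (Ωn n) = Ωn n := by
  have hβ := actE_βn_of_symplectic (transpose_tau_mul_Jmat_mul_tau hM.1)
  exact ⟨hβ, (actE (tau M)).apply_Ωn_of_apply_βn hβ⟩

end
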